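/- Let v(t,r) := ((1 + r·cos(t/2))·cos t, (1 + r·cos(t/2))·sin t, r·sin(t/2)) and P_∞ := [0,2π) × ℝ. For (x,y) ∈ ℝ², define Z_v(x,y) := { z ∈ ℝ : (x,y,z) ∈ v(P_∞) }. Then for every y ∈ ℝ with y ≠ 0, the set Z_v(−1,y) has exactly one element. -/

import Mathlib

/-!
Writing `c = cos (t/2)`, `s = sin (t/2)` and `K = 2c + 2rc² - r`, the point
`(x, y, z) = v(t, r)` satisfies `x + 1 = cK` and `y - z = sK`. Hence `x = -1` forces
`(y - z) c = 0`, and `c ≠ 0` because `y = 2sc(1 + rc) ≠ 0`; so the only candidate is `z = y`.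
Conversely, for `cos t ≠ 0` the choice `r = -2 cos (t/2) / cos t` gives
`v(t, r) = (-1, -tan t, -tan t)`, and `t = π - arctan y ∈ [0, 2π)` has `-tan t = y`.
-/

open Real Set

noncomputable def mobius (p : ℝ × ℝ) : ℝ × ℝ × ℝ :=
  ((1 + p.2 * cos (p.1 / 2)) * cos p.1, (1 + p.2 * cos (p.1 / 2)) * sin p.1, p.2 * sin (p.1 / 2))

lemma cos_eq_two_mul_cos_half_sq_sub_one (t : ℝ) : cos t = 2 * cos (t / 2) ^ 2 - 1 := by
  rw [← cos_two_mul, mul_div_cancel₀ t two_ne_zero]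

lemma sin_eq_two_mul_sin_half_mul_cos_half (t : ℝ) : sin t = 2 * sin (t / 2) * cos (t / 2) := by
  rw [← sin_two_mul, mul_div_cancel₀ t two_ne_zero]

lemma mobius_fst_add_one_mul_sin_half (t r : ℝ) :
    ((mobius (t, r)).1 + 1) * sin (t / 2) =
      ((mobius (t, r)).2.1 - (mobius (t, r)).2.2) * cos (t / 2) := by
  simp only [mobius, cos_eq_two_mul_cos_half_sq_sub_one t,
    sin_eq_two_mul_sin_half_mul_cos_half t]
  ring

lemma cos_half_ne_zero_of_mobius_snd_fst_ne_zero {t r : ℝ} (h : (mobius (t, r)).2.1 ≠ 0) :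
    cos (t / 2) ≠ 0 := by
  intro hc
  apply h
  simp [mobius, sin_eq_two_mul_sin_half_mul_cos_half t, hc]

lemma mobius_snd_snd_eq_snd_fst {p : ℝ × ℝ} {y z : ℝ} (hp : mobius p = (-1, y, z))
    (hy : y ≠ 0) : z = y := by
  obtain ⟨t, r⟩ := p
  have hc : cos (t / 2) ≠ 0 :=
    cos_half_ne_zero_of_mobius_snd_fst_ne_zero (by rwa [hp])
  have hrel := mobius_fst_add_one_mul_sin_half t r
  rw [hp] at hrel
  have hyz : (y - z) * cos (t / 2) = 0 := by simpa using hrel.symm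
  linarith [(mul_eq_zero.1 hyz).resolve_right hc]

lemma mobius_neg_two_mul_cos_half_div_cos {t : ℝ} (ht : cos t ≠ 0) :
    mobius (t, -2 * cos (t / 2) / cos t) = (-1, -tan t, -tan t) := by
  have hradius : 1 + -2 * cos (t / 2) / cos t * cos (t / 2) = -1 / cos t := by
    field_simp
    linear_combination cos_eq_two_mul_cos_half_sq_sub_one t
  simp only [mobius, hradius, tan_eq_sin_div_cos, sin_eq_two_mul_sin_half_mul_cos_half t]
  refine Prod.ext ?_ (Prod.ext ?_ ?_) <;> field_simp

lemma exists_mem_Ico_mobius_eq (y : ℝ) :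
    ∃ t ∈ Ico 0 (2 * π), ∃ r, mobius (t, r) = (-1, y, y) := by
  have hcos : cos (π - arctan y) ≠ 0 := by
    rw [cos_pi_sub]
    exact neg_ne_zero.2 (cos_arctan_pos y).ne'
  have htan : -tan (π - arctan y) = y := by rw [tan_pi_sub, tan_arctan, neg_neg]
  refine ⟨π - arctan y, ⟨?_, ?_⟩, _,
    (mobius_neg_two_mul_cos_half_div_cos hcos).trans (by rw [htan])⟩
  · linarith [arctan_lt_pi_div_two y, pi_pos]
  · linarith [neg_pi_div_two_lt_arctan y, pi_pos]

lemma mobius_cross_section_neg_one {y : ℝ} (hy : y ≠ 0) :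
    {z : ℝ | (-1, y, z) ∈ mobius '' Ico 0 (2 * π) ×ˢ univ} = {y} := by
  ext z
  constructor
  · rintro ⟨p, -, hp⟩
    exact mobius_snd_snd_eq_snd_fst hp hy
  · rintro rfl
    obtain ⟨t, ht, r, htr⟩ := exists_mem_Ico_mobius_eq z
    exact ⟨(t, r), ⟨ht, mem_univ r⟩, htr⟩

theorem common_mobius_cross_section_x_neg_one
    (v : ℝ × ℝ → ℝ × ℝ × ℝ)
    (hv : ∀ t r : ℝ, v (t, r) =
      ((1 + r * Real.cos (t / 2)) * Real.cos t,
       (1 + r * Real.cos (t / 2)) * Real.sin t,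
       r * Real.sin (t / 2)))
    (Pinf : Set (ℝ × ℝ)) (hPinf : Pinf = Set.Ico 0 (2 * π) ×ˢ Set.univ)
    (Z : ℝ → ℝ → Set ℝ)
    (hZ : ∀ x y : ℝ, Z x y = {z : ℝ | (x, y, z) ∈ v '' Pinf}) :
    ∀ y : ℝ, y ≠ 0 → (Z (-1) y).encard = 1 := by
  intro y hy
  have hmobius : v = mobius := funext fun p => hv p.1 p.2
  rw [hZ, hmobius, hPinf, mobius_cross_section_neg_one hy, encard_singleton]
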